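/- arXiv:2102.09533 — 2 statements merged into one kernel-verified Lean document; each statement's English description precedes it below -/
import Mathlib

section
/- Let φ, ψ : 𝔻 → 𝔻 be area-preserving diffeomorphisms, with f an action function for φ. Then the function f∘ψ + g_ψ − g_ψ∘(ψ^{−1}∘φ∘ψ) is an action function for ψ^{−1}∘φ∘ψ, where g_ψ is an action function for ψ; consequently the Calabi invariant is invariant under area-preserving conjugation: 𝒱(ψ^{−1}∘φ∘ψ, 0) = 𝒱(φ, 0). -/
open MeasureTheory Filter Metric Set Real
open scoped Topology

noncomputable section

/-- The closed disc of radius `s` centered at the origin in `ℝ²`. -/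
def Disc (s : ℝ) : Set (ℝ × ℝ) := Metric.closedBall 0 s

/-- β = (x dy - y dx)/2, the Cartesian expression of the 1-form (r²/2)dθ. -/
def betaForm (p : ℝ × ℝ) : (ℝ × ℝ) →L[ℝ] ℝ :=
  (p.1 / 2) • ContinuousLinearMap.snd ℝ ℝ ℝ - (p.2 / 2) • ContinuousLinearMap.fst ℝ ℝ ℝ

/-- The 1-form χ*β − β at the point p, with derivatives taken within the disc of radius s. -/
def pullbackMinusBeta (s : ℝ) (χ : ℝ × ℝ → ℝ × ℝ) (p : ℝ × ℝ) : (ℝ × ℝ) →L[ℝ] ℝ :=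
  (betaForm (χ p)).comp (fderivWithin ℝ χ (Disc s) p) - betaForm p

/-- f is an action function of χ on the disc of radius s : df = χ*β − β. -/
def IsActionFn (s : ℝ) (χ : ℝ × ℝ → ℝ × ℝ) (f : ℝ × ℝ → ℝ) : Prop :=
  ContDiffOn ℝ (⊤ : ℕ∞) f (Disc s) ∧
  ∀ p ∈ Disc s, fderivWithin ℝ f (Disc s) p = pullbackMinusBeta s χ p

/-- χ is a smooth area-preserving diffeomorphism of the disc of radius s
(preserving the boundary circle). -/
def AreaPres (s : ℝ) (χ : ℝ × ℝ → ℝ × ℝ) : Prop :=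
  ContDiffOn ℝ (⊤ : ℕ∞) χ (Disc s) ∧ Set.BijOn χ (Disc s) (Disc s) ∧
  Set.MapsTo χ (Metric.sphere 0 s) (Metric.sphere 0 s) ∧
  ∀ p ∈ Disc s, (fderivWithin ℝ χ (Disc s) p).det = 1

/-- The Calabi invariant associated to an action function f : its ω-mean value over the disc. -/
def Calabi (s : ℝ) (f : ℝ × ℝ → ℝ) : ℝ :=
  (∫ p in Disc s, f p) / (MeasureTheory.volume (Disc s)).toReal

/-- The action function f of χ is normalized so that its asymptotic mean value
on the boundary circle of radius s is 0. -/
def BoundaryMeanZero (s : ℝ) (χ : ℝ × ℝ → ℝ × ℝ) (f : ℝ × ℝ → ℝ) : Prop :=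
  ∀ x ∈ Metric.sphere (0 : ℝ × ℝ) s,
    Filter.Tendsto (fun n : ℕ => (∑ i ∈ Finset.range n, f (χ^[i] x)) / n)
      Filter.atTop (nhds 0)

/-- Rigid rotation of the plane by angle 2πθ₀. -/
def rot (θ₀ : ℝ) (p : ℝ × ℝ) : ℝ × ℝ :=
  (Real.cos (2 * π * θ₀) * p.1 - Real.sin (2 * π * θ₀) * p.2,
   Real.sin (2 * π * θ₀) * p.1 + Real.cos (2 * π * θ₀) * p.2)

/-! ### Auxiliary lemmas -/

lemma disc_convex : Convex ℝ (Disc 1) := convex_closedBall _ _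

lemma disc_compact : IsCompact (Disc 1) := isCompact_closedBall _ _

lemma disc_unique : UniqueDiffOn ℝ (Disc 1) :=
  uniqueDiffOn_convex disc_convex
    (by rw [Disc, interior_closedBall (0 : ℝ × ℝ) one_ne_zero]
        exact ⟨0, by simp⟩)

lemma disc_meas : MeasurableSet (Disc 1) := measurableSet_closedBall

/-- Continuity of the inverse of a continuous bijection of the compact disc. -/
lemma inv_continuousOn {ψ ψinv : ℝ × ℝ → ℝ × ℝ} (hψc : ContinuousOn ψ (Disc 1))
    (hbij : Set.BijOn ψ (Disc 1) (Disc 1))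
    (hinv₂ : ∀ p ∈ Disc 1, ψ (ψinv p) = p)
    (hinvmaps : Set.MapsTo ψinv (Disc 1) (Disc 1)) :
    ContinuousOn ψinv (Disc 1) := by
  haveI : CompactSpace (Disc 1) := isCompact_iff_compactSpace.mp disc_compact
  let e : (Disc 1 : Set (ℝ × ℝ)) ≃ (Disc 1 : Set (ℝ × ℝ)) := Set.BijOn.equiv ψ hbij
  have hec : Continuous e := Continuous.subtype_mk hψc.restrict _
  let h := Continuous.homeoOfEquivCompactToT2 (f := e) hec
  rw [continuousOn_iff_continuous_restrict]
  have key : (Disc 1).restrict ψinv = Subtype.val ∘ ⇑h.symm := by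
    funext q
    have h1 : ψ ((h.symm q : (Disc 1 : Set (ℝ × ℝ))) : ℝ × ℝ) = (q : ℝ × ℝ) :=
      congrArg Subtype.val (h.apply_symm_apply q)
    have h2 : ψ (ψinv (q : ℝ × ℝ)) = (q : ℝ × ℝ) := hinv₂ q q.2
    have h3 := hbij.injOn (h.symm q).2 (hinvmaps q.2) (h1.trans h2.symm)
    exact h3.symm
  change Continuous ((Disc 1).restrict ψinv)
  rw [key]
  exact continuous_subtype_val.comp h.symm.continuous

lemma inv_contDiffOn {ψ ψinv : ℝ × ℝ → ℝ × ℝ} (hψ : AreaPres 1 ψ)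
    (hinv₂ : ∀ p ∈ Disc 1, ψ (ψinv p) = p)
    (hinvmaps : Set.MapsTo ψinv (Disc 1) (Disc 1)) :
    ContDiffOn ℝ (⊤ : ℕ∞) ψinv (Disc 1) := by
  obtain ⟨hsm, hbij, -, hdet⟩ := hψ
  have hcont : ContinuousOn ψinv (Disc 1) :=
    inv_continuousOn hsm.continuousOn hbij hinv₂ hinvmaps
  have key : ∀ q ∈ Disc 1, ∃ e : (ℝ × ℝ) ≃L[ℝ] (ℝ × ℝ),
      (e : (ℝ × ℝ) →L[ℝ] (ℝ × ℝ)) = fderivWithin ℝ ψ (Disc 1) (ψinv q) := by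
    intro q hq
    have hdet' : (fderivWithin ℝ ψ (Disc 1) (ψinv q)).det ≠ 0 := by
      rw [hdet _ (hinvmaps hq)]; norm_num
    refine ⟨(LinearMap.equivOfDetNeZero (fderivWithin ℝ ψ (Disc 1) (ψinv q)).toLinearMap
          (by simpa [ContinuousLinearMap.det] using hdet')).toContinuousLinearEquiv, ?_⟩
    ext v <;> rfl
  have hder : ∀ q ∈ Disc 1, HasFDerivWithinAt ψinv
      (ContinuousLinearMap.inverse (fderivWithin ℝ ψ (Disc 1) (ψinv q))) (Disc 1) q := by
    intro q hq
    obtain ⟨e, he⟩ := key q hq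
    have htend : Tendsto ψinv (𝓝[Disc 1] q) (𝓝[Disc 1] (ψinv q)) :=
      (hcont q hq).tendsto_nhdsWithin hinvmaps
    have hf : HasFDerivWithinAt ψ (e : (ℝ × ℝ) →L[ℝ] (ℝ × ℝ)) (Disc 1) (ψinv q) := by
      rw [he]
      exact ((hsm.differentiableOn (by simp)) _ (hinvmaps hq)).hasFDerivWithinAt
    have hfg : ∀ᶠ x in 𝓝[Disc 1] q, ψ (ψinv x) = x := by
      filter_upwards [eventually_mem_nhdsWithin] with y hy
      exact hinv₂ y hy
    rw [← he, ContinuousLinearMap.inverse_equiv]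
    exact HasFDerivWithinAt.of_local_left_inverse htend hf hq hfg
  have hfd : ∀ q ∈ Disc 1, fderivWithin ℝ ψinv (Disc 1) q
      = ContinuousLinearMap.inverse (fderivWithin ℝ ψ (Disc 1) (ψinv q)) :=
    fun q hq => (hder q hq).fderivWithin (disc_unique q hq)
  have hdψ : ∀ n : ℕ, ContDiffOn ℝ n (fderivWithin ℝ ψ (Disc 1)) (Disc 1) := fun n =>
    hsm.fderivWithin disc_unique (by exact_mod_cast le_top)
  have hn : ∀ n : ℕ, ContDiffOn ℝ n ψinv (Disc 1) := by
    intro n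
    induction n with
    | zero => exact contDiffOn_zero.2 hcont
    | succ n ih =>
      have hc : ContDiffOn ℝ n (fun q => ContinuousLinearMap.inverse
          (fderivWithin ℝ ψ (Disc 1) (ψinv q))) (Disc 1) := by
        intro q hq
        obtain ⟨e, he⟩ := key q hq
        have h1 : ContDiffAt ℝ n ContinuousLinearMap.inverse
            (fderivWithin ℝ ψ (Disc 1) (ψinv q)) := by
          rw [← he]; exact contDiffAt_map_inverse e
        exact h1.comp_contDiffWithinAt q (((hdψ n).comp ih hinvmaps) q hq)
      have h2 : ContDiffOn ℝ n (fderivWithin ℝ ψinv (Disc 1)) (Disc 1) :=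
        hc.congr hfd
      exact_mod_cast contDiffOn_succ_of_fderivWithin
        (fun q hq => (hder q hq).differentiableWithinAt) (by simp) h2
  exact contDiffOn_infty.2 hn

/-- The conjugated action function identity (Part 1). -/
lemma conj_isActionFn {φ ψ ψinv : ℝ × ℝ → ℝ × ℝ}
    (hφ : AreaPres 1 φ) (hψ : AreaPres 1 ψ)
    (hinv₂ : ∀ p ∈ Disc 1, ψ (ψinv p) = p)
    (hinvmaps : Set.MapsTo ψinv (Disc 1) (Disc 1))
    (hψinv : ContDiffOn ℝ (⊤ : ℕ∞) ψinv (Disc 1))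
    {f gψ : ℝ × ℝ → ℝ}
    (hf : IsActionFn 1 φ f) (hg : IsActionFn 1 ψ gψ) :
    IsActionFn 1 (fun p => ψinv (φ (ψ p)))
      (fun p => f (ψ p) + gψ p - gψ (ψinv (φ (ψ p)))) := by
  have mψ : MapsTo ψ (Disc 1) (Disc 1) := hψ.2.1.mapsTo
  have mφ : MapsTo φ (Disc 1) (Disc 1) := hφ.2.1.mapsTo
  have mφψ : MapsTo (fun p => φ (ψ p)) (Disc 1) (Disc 1) := fun p hp => mφ (mψ hp)
  have mh : MapsTo (fun p => ψinv (φ (ψ p))) (Disc 1) (Disc 1) :=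
    fun p hp => hinvmaps (mφ (mψ hp))
  have hφψ : ContDiffOn ℝ (⊤ : ℕ∞) (fun p => φ (ψ p)) (Disc 1) := hφ.1.comp hψ.1 mψ
  have hh : ContDiffOn ℝ (⊤ : ℕ∞) (fun p => ψinv (φ (ψ p))) (Disc 1) := hψinv.comp hφψ mφψ
  constructor
  · exact ((hf.1.comp hψ.1 mψ).add hg.1).sub (hg.1.comp hh mh)
  · intro p hp
    have hU := disc_unique p hp
    have dψ : HasFDerivWithinAt ψ (fderivWithin ℝ ψ (Disc 1) p) (Disc 1) p :=
      ((hψ.1.differentiableOn (by simp)) p hp).hasFDerivWithinAt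
    have dh : HasFDerivWithinAt (fun p => ψinv (φ (ψ p)))
        (fderivWithin ℝ (fun p => ψinv (φ (ψ p))) (Disc 1) p) (Disc 1) p :=
      ((hh.differentiableOn (by simp)) p hp).hasFDerivWithinAt
    have df : HasFDerivWithinAt f (pullbackMinusBeta 1 φ (ψ p)) (Disc 1) (ψ p) := by
      have := ((hf.1.differentiableOn (by simp)) _ (mψ hp)).hasFDerivWithinAt
      rwa [hf.2 _ (mψ hp)] at this
    have dg : HasFDerivWithinAt gψ (pullbackMinusBeta 1 ψ p) (Disc 1) p := by
      have := ((hg.1.differentiableOn (by simp)) p hp).hasFDerivWithinAt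
      rwa [hg.2 p hp] at this
    have dgh : HasFDerivWithinAt gψ (pullbackMinusBeta 1 ψ (ψinv (φ (ψ p))))
        (Disc 1) (ψinv (φ (ψ p))) := by
      have := ((hg.1.differentiableOn (by simp)) _ (mh hp)).hasFDerivWithinAt
      rwa [hg.2 _ (mh hp)] at this
    have dF : HasFDerivWithinAt (fun p => f (ψ p) + gψ p - gψ (ψinv (φ (ψ p))))
        (((pullbackMinusBeta 1 φ (ψ p)).comp (fderivWithin ℝ ψ (Disc 1) p)
            + pullbackMinusBeta 1 ψ p)
          - (pullbackMinusBeta 1 ψ (ψinv (φ (ψ p)))).comp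
              (fderivWithin ℝ (fun p => ψinv (φ (ψ p))) (Disc 1) p)) (Disc 1) p :=
      ((df.comp p dψ mψ).add dg).sub (dgh.comp p dh mh)
    rw [dF.fderivWithin hU]
    have k1 : ψ (ψinv (φ (ψ p))) = φ (ψ p) := hinv₂ _ (mφ (mψ hp))
    have k2 : (fderivWithin ℝ ψ (Disc 1) (ψinv (φ (ψ p)))).comp
        (fderivWithin ℝ (fun p => ψinv (φ (ψ p))) (Disc 1) p)
        = (fderivWithin ℝ φ (Disc 1) (ψ p)).comp (fderivWithin ℝ ψ (Disc 1) p) := by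
      have e1 : fderivWithin ℝ (ψ ∘ fun p => ψinv (φ (ψ p))) (Disc 1) p
          = (fderivWithin ℝ ψ (Disc 1) (ψinv (φ (ψ p)))).comp
              (fderivWithin ℝ (fun p => ψinv (φ (ψ p))) (Disc 1) p) :=
        fderivWithin_comp p ((hψ.1.differentiableOn (by simp)) _ (mh hp))
          ((hh.differentiableOn (by simp)) p hp) mh hU
      have e2 : fderivWithin ℝ (φ ∘ ψ) (Disc 1) p
          = (fderivWithin ℝ φ (Disc 1) (ψ p)).comp (fderivWithin ℝ ψ (Disc 1) p) :=
        fderivWithin_comp p ((hφ.1.differentiableOn (by simp)) _ (mψ hp))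
          ((hψ.1.differentiableOn (by simp)) p hp) mψ hU
      rw [← e1, ← e2]
      apply fderivWithin_congr
      · intro z hz
        exact hinv₂ _ (mφ (mψ hz))
      · exact hinv₂ _ (mφ (mψ hp))
    simp only [pullbackMinusBeta]
    refine ContinuousLinearMap.ext fun v => ?_
    have k2v : (fderivWithin ℝ ψ (Disc 1) (ψinv (φ (ψ p))))
        ((fderivWithin ℝ (fun p => ψinv (φ (ψ p))) (Disc 1) p) v)
        = (fderivWithin ℝ φ (Disc 1) (ψ p)) ((fderivWithin ℝ ψ (Disc 1) p) v) :=
      DFunLike.congr_fun k2 v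
    simp only [ContinuousLinearMap.add_apply, ContinuousLinearMap.sub_apply,
      ContinuousLinearMap.comp_apply, k1, k2v]
    ring

/-- Change of variables : integral invariance under an area preserving map of the disc. -/
lemma cov_integral {χ : ℝ × ℝ → ℝ × ℝ} (hχ : AreaPres 1 χ) (G : ℝ × ℝ → ℝ) :
    ∫ p in Disc 1, G (χ p) = ∫ p in Disc 1, G p := by
  have h' : ∀ x ∈ Disc 1, HasFDerivWithinAt χ (fderivWithin ℝ χ (Disc 1) x) (Disc 1) x :=
    fun x hx => ((hχ.1.differentiableOn (by simp)) x hx).hasFDerivWithinAt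
  have key := integral_image_eq_integral_abs_det_fderiv_smul volume disc_meas h' hχ.2.1.injOn G
  have e1 : ∫ p in Disc 1, G (χ p)
      = ∫ x in Disc 1, |(fderivWithin ℝ χ (Disc 1) x).det| • G (χ x) :=
    setIntegral_congr_fun disc_meas (fun x hx => by rw [hχ.2.2.2 x hx]; norm_num)
  rw [e1, ← key, hχ.2.1.image_eq]

/-- f∘ψ + g_ψ − g_ψ∘(ψ⁻¹∘φ∘ψ) is an action function for ψ⁻¹∘φ∘ψ,
and the Calabi invariant is invariant under area-preserving conjugation. -/
theorem calabi_conjugation_invariant (φ ψ ψinv : ℝ × ℝ → ℝ × ℝ)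
    (hφ : AreaPres 1 φ) (hψ : AreaPres 1 ψ)
    (hinv₁ : ∀ p ∈ Disc 1, ψinv (ψ p) = p)
    (hinv₂ : ∀ p ∈ Disc 1, ψ (ψinv p) = p)
    (hinvmaps : Set.MapsTo ψinv (Disc 1) (Disc 1))
    (f gψ : ℝ × ℝ → ℝ)
    (hf : IsActionFn 1 φ f) (hg : IsActionFn 1 ψ gψ) :
    IsActionFn 1 (fun p => ψinv (φ (ψ p)))
      (fun p => f (ψ p) + gψ p - gψ (ψinv (φ (ψ p)))) ∧
    ∀ fφ0 fh0 : ℝ × ℝ → ℝ,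
      IsActionFn 1 φ fφ0 → BoundaryMeanZero 1 φ fφ0 →
      IsActionFn 1 (fun p => ψinv (φ (ψ p))) fh0 →
      BoundaryMeanZero 1 (fun p => ψinv (φ (ψ p))) fh0 →
      Calabi 1 fh0 = Calabi 1 fφ0 := by
  have hψinv : ContDiffOn ℝ (⊤ : ℕ∞) ψinv (Disc 1) := inv_contDiffOn hψ hinv₂ hinvmaps
  have mψ : MapsTo ψ (Disc 1) (Disc 1) := hψ.2.1.mapsTo
  have mφ : MapsTo φ (Disc 1) (Disc 1) := hφ.2.1.mapsTo
  have mh : MapsTo (fun p => ψinv (φ (ψ p))) (Disc 1) (Disc 1) :=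
    fun p hp => hinvmaps (mφ (mψ hp))
  have hhc : ContinuousOn (fun p => ψinv (φ (ψ p))) (Disc 1) :=
    ((hψinv.comp (hφ.1.comp hψ.1 mψ) (fun p hp => mφ (mψ hp)))).continuousOn
  refine ⟨conj_isActionFn hφ hψ hinv₂ hinvmaps hψinv hf hg, ?_⟩
  intro fφ0 fh0 hfφ0 hbφ0 hfh0 hbh0
  have hF0 : IsActionFn 1 (fun p => ψinv (φ (ψ p)))
      (fun p => fφ0 (ψ p) + gψ p - gψ (ψinv (φ (ψ p)))) :=
    conj_isActionFn hφ hψ hinv₂ hinvmaps hψinv hfφ0 hg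
  set h : ℝ × ℝ → ℝ × ℝ := fun p => ψinv (φ (ψ p)) with hh_def
  set F0 : ℝ × ℝ → ℝ := fun p => fφ0 (ψ p) + gψ p - gψ (ψinv (φ (ψ p))) with hF0_def
  -- boundary base point
  have hx0s : ((1 : ℝ), (0 : ℝ)) ∈ Metric.sphere (0 : ℝ × ℝ) 1 := by
    simp [mem_sphere_iff_norm, Prod.norm_def]
  have hx0D : ((1 : ℝ), (0 : ℝ)) ∈ Disc 1 := sphere_subset_closedBall hx0s
  set x0 : ℝ × ℝ := ((1 : ℝ), (0 : ℝ)) with hx0_def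
  -- the difference fh0 - F0 is constant
  have hdiff_h0 : DifferentiableOn ℝ fh0 (Disc 1) := hfh0.1.differentiableOn (by simp)
  have hdiff_F0 : DifferentiableOn ℝ F0 (Disc 1) := hF0.1.differentiableOn (by simp)
  set c : ℝ := fh0 x0 - F0 x0 with hc_def
  have hconst : ∀ p ∈ Disc 1, fh0 p - F0 p = c := by
    intro p hp
    exact disc_convex.is_const_of_fderivWithin_eq_zero (hdiff_h0.sub hdiff_F0)
      (fun z hz => by
        rw [fderivWithin_sub (disc_unique z hz) (hdiff_h0 z hz) (hdiff_F0 z hz),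
          hfh0.2 z hz, hF0.2 z hz, sub_self]) hp hx0D
  -- orbit facts
  have orbD : ∀ n, h^[n] x0 ∈ Disc 1 := by
    intro n; induction n with
    | zero => simpa using hx0D
    | succ n ih => rw [Function.iterate_succ_apply']; exact mh ih
  have orbψ : ∀ n, ψ (h^[n] x0) = φ^[n] (ψ x0) := by
    intro n; induction n with
    | zero => simp
    | succ n ih =>
      rw [Function.iterate_succ_apply', Function.iterate_succ_apply']
      show ψ (ψinv (φ (ψ (h^[n] x0)))) = φ (φ^[n] (ψ x0))
      rw [hinv₂ _ (mφ (mψ (orbD n))), ih]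
  -- sum identity
  have sum_id : ∀ n : ℕ, (∑ i ∈ Finset.range n, fh0 (h^[i] x0))
      = (∑ i ∈ Finset.range n, fφ0 (φ^[i] (ψ x0))) + (gψ x0 - gψ (h^[n] x0)) + n * c := by
    intro n
    have e1 : ∀ i, fh0 (h^[i] x0)
        = fφ0 (φ^[i] (ψ x0)) + (gψ (h^[i] x0) - gψ (h^[i + 1] x0)) + c := by
      intro i
      have hz : fh0 (h^[i] x0) = F0 (h^[i] x0) + c := by
        have := hconst _ (orbD i); linarith
      have hF0v : F0 (h^[i] x0)
          = fφ0 (ψ (h^[i] x0)) + gψ (h^[i] x0) - gψ (h (h^[i] x0)) := rfl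
      rw [hz, hF0v, orbψ i, ← Function.iterate_succ_apply' h i x0]
      ring
    rw [Finset.sum_congr rfl (fun i _ => e1 i), Finset.sum_add_distrib,
      Finset.sum_add_distrib, Finset.sum_range_sub' (fun i => gψ (h^[i] x0)) n,
      Finset.sum_const, Finset.card_range]
    simp only [Function.iterate_zero_apply, nsmul_eq_mul]
  -- limits
  have T1 : Tendsto (fun n : ℕ => (∑ i ∈ Finset.range n, fφ0 (φ^[i] (ψ x0))) / n)
      atTop (𝓝 0) := hbφ0 (ψ x0) (hψ.2.2.1 hx0s)
  obtain ⟨M, hM⟩ := disc_compact.exists_bound_of_continuousOn hg.1.continuousOn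
  have T2 : Tendsto (fun n : ℕ => (gψ x0 - gψ (h^[n] x0)) / n) atTop (𝓝 0) := by
    refine squeeze_zero_norm (fun n => ?_) (tendsto_const_div_atTop_nhds_zero_nat (2 * M))
    rcases Nat.eq_zero_or_pos n with h0 | h0
    · subst h0; simp
    · have hb : ‖gψ x0 - gψ (h^[n] x0)‖ ≤ 2 * M := by
        calc ‖gψ x0 - gψ (h^[n] x0)‖ ≤ ‖gψ x0‖ + ‖gψ (h^[n] x0)‖ := norm_sub_le _ _
          _ ≤ M + M := add_le_add (hM _ hx0D) (hM _ (orbD n))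
          _ = 2 * M := by ring
      have hn : (0 : ℝ) < n := by exact_mod_cast h0
      rw [norm_div, Real.norm_natCast, div_le_div_iff₀ hn hn]
      exact mul_le_mul_of_nonneg_right hb hn.le
  have T3 : Tendsto (fun n : ℕ => ((n : ℝ) * c) / n) atTop (𝓝 c) := by
    refine Tendsto.congr' ?_ tendsto_const_nhds
    filter_upwards [eventually_gt_atTop 0] with n hn
    have hne : (n : ℝ) ≠ 0 := by exact_mod_cast hn.ne'
    field_simp
  have Tc : Tendsto (fun n : ℕ => (∑ i ∈ Finset.range n, fh0 (h^[i] x0)) / n)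
      atTop (𝓝 c) := by
    have hfun : (fun n : ℕ => (∑ i ∈ Finset.range n, fh0 (h^[i] x0)) / n)
        = fun n : ℕ => ((∑ i ∈ Finset.range n, fφ0 (φ^[i] (ψ x0))) / n
            + (gψ x0 - gψ (h^[n] x0)) / n) + ((n : ℝ) * c) / n := by
      funext n; rw [sum_id n, add_div, add_div]
    rw [hfun]
    simpa using (T1.add T2).add T3
  have hc0 : c = 0 := tendsto_nhds_unique Tc (hbh0 x0 hx0s)
  have heqF : EqOn fh0 F0 (Disc 1) := by
    intro p hp
    have hcp := hconst p hp
    rw [hc0] at hcp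
    linarith
  -- integrability and change of variables
  have int1 : IntegrableOn (fun p => fφ0 (ψ p)) (Disc 1) volume :=
    ContinuousOn.integrableOn_compact disc_compact
      (hfφ0.1.continuousOn.comp hψ.1.continuousOn mψ)
  have int2 : IntegrableOn gψ (Disc 1) volume :=
    ContinuousOn.integrableOn_compact disc_compact hg.1.continuousOn
  have int3 : IntegrableOn (fun p => gψ (ψinv (φ (ψ p)))) (Disc 1) volume :=
    ContinuousOn.integrableOn_compact disc_compact (hg.1.continuousOn.comp hhc mh)
  have int12 : IntegrableOn (fun p => fφ0 (ψ p) + gψ p) (Disc 1) volume := int1.add int2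
  have split : ∫ p in Disc 1, F0 p
      = ((∫ p in Disc 1, fφ0 (ψ p)) + ∫ p in Disc 1, gψ p)
        - ∫ p in Disc 1, gψ (ψinv (φ (ψ p))) := by
    simp only [hF0_def]
    rw [integral_sub int12 int3, integral_add int1 int2]
  have e3 : ∫ p in Disc 1, gψ (ψinv (φ (ψ p))) = ∫ p in Disc 1, gψ p := by
    have a1 := cov_integral hψ (fun z => gψ (ψinv (φ z)))
    have a2 := cov_integral hφ (fun z => gψ (ψinv z))
    have a3 := (cov_integral hψ (fun z => gψ (ψinv z))).symm
    have a4 : ∫ p in Disc 1, gψ (ψinv (ψ p)) = ∫ p in Disc 1, gψ p :=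
      setIntegral_congr_fun disc_meas (fun p hp => by rw [hinv₁ p hp])
    calc ∫ p in Disc 1, gψ (ψinv (φ (ψ p))) = ∫ p in Disc 1, gψ (ψinv (φ p)) := a1
      _ = ∫ p in Disc 1, gψ (ψinv p) := a2
      _ = ∫ p in Disc 1, gψ (ψinv (ψ p)) := a3
      _ = ∫ p in Disc 1, gψ p := a4
  have I : ∫ p in Disc 1, fh0 p = ∫ p in Disc 1, fφ0 p := by
    rw [setIntegral_congr_fun disc_meas heqF, split, cov_integral hψ fφ0, e3]
    ring
  simp only [Calabi]
  rw [I]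
end
end

section
/- If φ_n : 𝔻 → 𝔻 is a sequence of area-preserving diffeomorphisms converging to an area-preserving diffeomorphism φ in the C¹ topology, then 𝒱(φ_n, 0) → 𝒱(φ, 0). -/
open MeasureTheory Filter Metric Set Real
open scoped Topology

noncomputable section

/-! ### Auxiliary material -/

namespace CalabiAux

lemma discUnique : UniqueDiffOn ℝ (Disc 1) :=
  uniqueDiffOn_convex (convex_closedBall _ _)
    (by rw [Disc, interior_closedBall (0 : ℝ × ℝ) one_ne_zero]
        exact ⟨0, mem_ball_self one_pos⟩)

lemma mem_disc {p : ℝ × ℝ} : p ∈ Disc 1 ↔ ‖p‖ ≤ 1 := by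
  rw [Disc, mem_closedBall_zero_iff]

lemma sphere_sub_disc : Metric.sphere (0 : ℝ × ℝ) 1 ⊆ Disc 1 := by
  rw [Disc]; exact sphere_subset_closedBall

lemma betaForm_apply (q v : ℝ × ℝ) : betaForm q v = q.1 / 2 * v.2 - q.2 / 2 * v.1 := by
  simp [betaForm]

lemma betaForm_sub (q q' : ℝ × ℝ) : ‖betaForm q - betaForm q'‖ ≤ ‖q - q'‖ := by
  apply ContinuousLinearMap.opNorm_le_bound _ (norm_nonneg _)
  intro v
  have h1 : |q.1 - q'.1| ≤ ‖q - q'‖ := by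
    simpa [Real.norm_eq_abs] using norm_fst_le (q - q')
  have h2 : |q.2 - q'.2| ≤ ‖q - q'‖ := by
    simpa [Real.norm_eq_abs] using norm_snd_le (q - q')
  have hv1 : |v.1| ≤ ‖v‖ := by simpa [Real.norm_eq_abs] using norm_fst_le v
  have hv2 : |v.2| ≤ ‖v‖ := by simpa [Real.norm_eq_abs] using norm_snd_le v
  have : (betaForm q - betaForm q') v
      = (q.1 - q'.1) / 2 * v.2 - (q.2 - q'.2) / 2 * v.1 := by
    simp [betaForm_apply, ContinuousLinearMap.sub_apply]; ring
  rw [this, Real.norm_eq_abs]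
  have habs : |(q.1 - q'.1) / 2 * v.2 - (q.2 - q'.2) / 2 * v.1|
      ≤ |(q.1 - q'.1) / 2 * v.2| + |(q.2 - q'.2) / 2 * v.1| := abs_sub _ _
  have e1 : |(q.1 - q'.1) / 2 * v.2| ≤ ‖q - q'‖ / 2 * ‖v‖ := by
    rw [abs_mul, abs_div]
    apply mul_le_mul (by simpa using div_le_div_of_nonneg_right h1 (by norm_num)) hv2 (abs_nonneg _)
    positivity
  have e2 : |(q.2 - q'.2) / 2 * v.1| ≤ ‖q - q'‖ / 2 * ‖v‖ := by
    rw [abs_mul, abs_div]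
    apply mul_le_mul (by simpa using div_le_div_of_nonneg_right h2 (by norm_num)) hv1 (abs_nonneg _)
    positivity
  nlinarith [norm_nonneg v, norm_nonneg (q - q')]

lemma betaForm_zero : betaForm (0 : ℝ × ℝ) = 0 := by
  ext v <;> simp [betaForm]

lemma betaForm_norm (q : ℝ × ℝ) : ‖betaForm q‖ ≤ ‖q‖ := by
  simpa [betaForm_zero] using betaForm_sub q 0

lemma det_bijective {A : (ℝ × ℝ) →L[ℝ] (ℝ × ℝ)} (h : A.det = 1) :
    Function.Bijective A := by
  have h0 : LinearMap.det (↑A : (ℝ × ℝ) →ₗ[ℝ] (ℝ × ℝ)) ≠ 0 := by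
    have : LinearMap.det (↑A : (ℝ × ℝ) →ₗ[ℝ] (ℝ × ℝ)) = A.det := rfl
    rw [this, h]; exact one_ne_zero
  let e : (ℝ × ℝ) ≃ₗ[ℝ] (ℝ × ℝ) :=
    LinearMap.equivOfDetNeZero (A : (ℝ × ℝ) →ₗ[ℝ] (ℝ × ℝ)) h0
  have he : (e : (ℝ × ℝ) →ₗ[ℝ] (ℝ × ℝ)) = (A : (ℝ × ℝ) →ₗ[ℝ] (ℝ × ℝ)) :=
    LinearEquiv.coe_ofIsUnitDet _
  have hfun : ∀ x, e x = A x := by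
    intro x
    have := congrArg (fun (g : (ℝ × ℝ) →ₗ[ℝ] (ℝ × ℝ)) => g x) he
    simpa using this
  exact ⟨fun x y hxy => e.injective (by rw [hfun, hfun, hxy]),
    fun y => ⟨e.symm y, by rw [← hfun]; exact e.apply_symm_apply y⟩⟩

/-- Corner of the unit square (= unit closed ball of `ℝ × ℝ` with the sup norm). -/
def IsCorner (p : ℝ × ℝ) : Prop := |p.1| = 1 ∧ |p.2| = 1

lemma isCorner_iff (p : ℝ × ℝ) :
    IsCorner p ↔ p = (1, 1) ∨ p = (1, -1) ∨ p = (-1, 1) ∨ p = (-1, -1) := by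
  rw [IsCorner, abs_eq zero_le_one, abs_eq zero_le_one, Prod.ext_iff, Prod.ext_iff,
    Prod.ext_iff, Prod.ext_iff]
  simp only
  tauto

lemma corner_mem_sphere {p : ℝ × ℝ} (h : IsCorner p) :
    p ∈ Metric.sphere (0 : ℝ × ℝ) 1 := by
  rw [mem_sphere_zero_iff_norm, Prod.norm_def, Real.norm_eq_abs, Real.norm_eq_abs, h.1, h.2]
  simp

lemma corner_dist {p q : ℝ × ℝ} (hp : IsCorner p) (hq : IsCorner q)
    (h : dist p q < 2) : p = q := by
  rw [isCorner_iff] at hp hq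
  rcases hp with rfl | rfl | rfl | rfl <;> rcases hq with rfl | rfl | rfl | rfl <;>
    first
      | rfl
      | (exfalso; simp only [Prod.dist_eq, Real.dist_eq] at h; norm_num at h)


lemma hasFDW {χ : ℝ × ℝ → ℝ × ℝ} (hχ : AreaPres 1 χ) {p : ℝ × ℝ} (hp : p ∈ Disc 1) :
    HasFDerivWithinAt χ (fderivWithin ℝ χ (Disc 1) p) (Disc 1) p :=
  ((hχ.1.differentiableOn (by simp)) p hp).hasFDerivWithinAt

lemma corner_preimage {χ : ℝ × ℝ → ℝ × ℝ} (hχ : AreaPres 1 χ) {x : ℝ × ℝ}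
    (hx : x ∈ Disc 1) (hc : IsCorner (χ x)) : x ∈ Metric.sphere (0 : ℝ × ℝ) 1 := by
  by_contra hxs
  have hn : ‖x‖ < 1 :=
    lt_of_le_of_ne (mem_disc.1 hx) (by simpa [mem_sphere_zero_iff_norm] using hxs)
  have hnb : Disc 1 ∈ 𝓝 x := by
    rw [Disc]
    exact Filter.mem_of_superset (Metric.isOpen_ball.mem_nhds (mem_ball_zero_iff.2 hn))
      Metric.ball_subset_closedBall
  set a := (χ x).1 with ha
  set b := (χ x).2 with hb
  set L : (ℝ × ℝ) →L[ℝ] ℝ :=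
    a • ContinuousLinearMap.fst ℝ ℝ ℝ + b • ContinuousLinearMap.snd ℝ ℝ ℝ with hL
  have hLap : ∀ q : ℝ × ℝ, L q = a * q.1 + b * q.2 := by
    intro q; simp [hL]
  have ha2 : a ^ 2 = 1 := by rw [← sq_abs, hc.1]; norm_num
  have hb2 : b ^ 2 = 1 := by rw [← sq_abs, hc.2]; norm_num
  have hLmax : IsLocalMax (fun p => L (χ p)) x := by
    filter_upwards [hnb] with p hp
    have hχp : χ p ∈ Disc 1 := hχ.2.1.1 hp
    have h1 : |(χ p).1| ≤ 1 := by
      have := mem_disc.1 hχp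
      exact le_trans (by simpa [Real.norm_eq_abs] using norm_fst_le (χ p)) this
    have h2 : |(χ p).2| ≤ 1 := by
      have := mem_disc.1 hχp
      exact le_trans (by simpa [Real.norm_eq_abs] using norm_snd_le (χ p)) this
    have e1 : a * (χ p).1 ≤ 1 := by
      have : a * (χ p).1 ≤ |a * (χ p).1| := le_abs_self _
      rw [abs_mul, hc.1, one_mul] at this
      exact this.trans h1
    have e2 : b * (χ p).2 ≤ 1 := by
      have : b * (χ p).2 ≤ |b * (χ p).2| := le_abs_self _
      rw [abs_mul, hc.2, one_mul] at this
      exact this.trans h2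
    simp only [hLap]
    nlinarith
  have hdiff : DifferentiableAt ℝ χ x := (hχ.1.contDiffAt hnb).differentiableAt (by simp)
  have hF : HasFDerivAt (fun p => L (χ p)) (L.comp (fderiv ℝ χ x)) x :=
    L.hasFDerivAt.comp x hdiff.hasFDerivAt
  have hzero := hLmax.hasFDerivAt_eq_zero hF
  have hdet : (fderiv ℝ χ x).det = 1 := by
    rw [← fderivWithin_of_mem_nhds (𝕜 := ℝ) (f := χ) hnb]
    exact hχ.2.2.2 x hx
  obtain ⟨v, hv⟩ := (det_bijective hdet).2 (a, b)
  have hev := congrArg (fun (g : (ℝ × ℝ) →L[ℝ] ℝ) => g v) hzero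
  simp only [ContinuousLinearMap.comp_apply, ContinuousLinearMap.zero_apply] at hev
  rw [hv, hLap] at hev
  simp only at hev
  nlinarith

lemma key_line {χ : ℝ × ℝ → ℝ × ℝ} (hχ : AreaPres 1 χ) {p : ℝ × ℝ}
    (hp : p ∈ Metric.sphere (0 : ℝ × ℝ) 1) {e : ℝ × ℝ} (he : e ≠ 0) {δ : ℝ} (hδ : 0 < δ)
    (hline : ∀ t ∈ Ioo (-δ) δ, (p + t • e) ∈ Metric.sphere (0 : ℝ × ℝ) 1)
    (hcorner : IsCorner (χ p)) : False := by
  set A := fderivWithin ℝ χ (Disc 1) p with hA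
  have hpD : p ∈ Disc 1 := sphere_sub_disc hp
  have hAw : HasFDerivWithinAt χ A (Disc 1) p := hasFDW hχ hpD
  set ℓ : ℝ → ℝ × ℝ := fun t => p + t • e with hℓ
  have hℓ0 : ℓ 0 = p := by simp [hℓ]
  have hld : HasDerivAt ℓ e 0 := by
    have : HasDerivAt (fun t : ℝ => t • e) ((1 : ℝ) • e) 0 := (hasDerivAt_id 0).smul_const e
    simpa [hℓ, one_smul] using this.const_add p
  have hmaps : MapsTo ℓ (Ioo (-δ) δ) (Disc 1) := fun t ht => sphere_sub_disc (hline t ht)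
  have hv : HasDerivWithinAt (χ ∘ ℓ) (A e) (Ioo (-δ) δ) 0 := by
    refine HasFDerivWithinAt.comp_hasDerivWithinAt 0 ?_ hld.hasDerivWithinAt hmaps
    rw [hℓ0]; exact hAw
  have hva : HasDerivAt (χ ∘ ℓ) (A e) 0 :=
    hv.hasDerivAt (Ioo_mem_nhds (neg_lt_zero.2 hδ) hδ)
  have hmem : ∀ᶠ t in 𝓝 (0 : ℝ), χ (ℓ t) ∈ Disc 1 := by
    filter_upwards [Ioo_mem_nhds (neg_lt_zero.2 hδ) hδ] with t ht
    exact hχ.2.1.1 (hmaps ht)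
  have h1d : HasDerivAt (fun t => (χ (ℓ t)).1) (A e).1 0 :=
    ((ContinuousLinearMap.fst ℝ ℝ ℝ).hasFDerivAt.comp_hasDerivAt 0 hva)
  have h2d : HasDerivAt (fun t => (χ (ℓ t)).2) (A e).2 0 :=
    ((ContinuousLinearMap.snd ℝ ℝ ℝ).hasFDerivAt.comp_hasDerivAt 0 hva)
  have key0 : ∀ (g : ℝ → ℝ) (c : ℝ), HasDerivAt g c 0 → (∀ᶠ t in 𝓝 (0:ℝ), |g t| ≤ 1) →
      |g 0| = 1 → c = 0 := by
    intro g c hg hbound habs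
    rcases (abs_eq zero_le_one).1 habs with h | h
    · refine IsLocalMax.hasDerivAt_eq_zero ?_ hg
      filter_upwards [hbound] with t ht
      rw [h]; exact le_trans (le_abs_self _) ht
    · refine IsLocalMin.hasDerivAt_eq_zero ?_ hg
      filter_upwards [hbound] with t ht
      rw [h]; exact neg_le_of_abs_le ht
  have hb1 : ∀ᶠ t in 𝓝 (0:ℝ), |(χ (ℓ t)).1| ≤ 1 := by
    filter_upwards [hmem] with t ht
    exact le_trans (by simpa [Real.norm_eq_abs] using norm_fst_le (χ (ℓ t))) (mem_disc.1 ht)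
  have hb2 : ∀ᶠ t in 𝓝 (0:ℝ), |(χ (ℓ t)).2| ≤ 1 := by
    filter_upwards [hmem] with t ht
    exact le_trans (by simpa [Real.norm_eq_abs] using norm_snd_le (χ (ℓ t))) (mem_disc.1 ht)
  have hc1 : (A e).1 = 0 := key0 _ _ h1d hb1 (by rw [show ℓ 0 = p from hℓ0]; exact hcorner.1)
  have hc2 : (A e).2 = 0 := key0 _ _ h2d hb2 (by rw [show ℓ 0 = p from hℓ0]; exact hcorner.2)
  have hAe : A e = 0 := Prod.ext hc1 hc2
  have hdet : A.det = 1 := hχ.2.2.2 p hpD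
  have : e = 0 := (det_bijective hdet).1 (by rw [hAe, map_zero])
  exact he this

lemma noncorner_image {χ : ℝ × ℝ → ℝ × ℝ} (hχ : AreaPres 1 χ) {p : ℝ × ℝ}
    (hp : p ∈ Metric.sphere (0 : ℝ × ℝ) 1) (hnc : ¬ IsCorner p)
    (hcim : IsCorner (χ p)) : False := by
  have hn : max |p.1| |p.2| = 1 := by
    have := mem_sphere_zero_iff_norm.1 hp
    rwa [Prod.norm_def, Real.norm_eq_abs, Real.norm_eq_abs] at this
  have h1 : |p.1| ≤ 1 := le_of_max_le_left hn.le
  have h2 : |p.2| ≤ 1 := le_of_max_le_right hn.le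
  have hcase : |p.1| = 1 ∨ |p.2| = 1 := by
    rcases max_cases |p.1| |p.2| with ⟨h, _⟩ | ⟨h, _⟩
    · left; rw [← h]; exact hn
    · right; rw [← h]; exact hn
  have hnotboth : ¬ (|p.1| = 1 ∧ |p.2| = 1) := hnc
  rcases hcase with hc1 | hc2
  · -- |p.1| = 1, |p.2| < 1 ; move vertically
    have hlt : |p.2| < 1 := lt_of_le_of_ne h2 (fun h => hnotboth ⟨hc1, h⟩)
    refine key_line hχ hp (e := ((0 : ℝ), (1 : ℝ)))
      (by simp [Prod.ext_iff]) (δ := 1 - |p.2|) (by linarith) ?_ hcim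
    intro t ht
    rw [mem_sphere_zero_iff_norm, Prod.norm_def]
    have hx : p + t • ((0 : ℝ), (1 : ℝ)) = (p.1, p.2 + t) := by
      simp [Prod.ext_iff]
    rw [hx]
    simp only [Real.norm_eq_abs]
    have : |p.2 + t| ≤ 1 := by
      rcases ht with ⟨ht1, ht2⟩
      have := abs_add_le p.2 t
      have : |p.2 + t| ≤ |p.2| + |t| := abs_add_le _ _
      have htabs : |t| < 1 - |p.2| := abs_lt.2 ⟨ht1, ht2⟩
      linarith
    rw [hc1]
    exact max_eq_left this
  · -- |p.2| = 1, |p.1| < 1 ; move horizontally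
    have hlt : |p.1| < 1 := lt_of_le_of_ne h1 (fun h => hnotboth ⟨h, hc2⟩)
    refine key_line hχ hp (e := ((1 : ℝ), (0 : ℝ)))
      (by simp [Prod.ext_iff]) (δ := 1 - |p.1|) (by linarith) ?_ hcim
    intro t ht
    rw [mem_sphere_zero_iff_norm, Prod.norm_def]
    have hx : p + t • ((1 : ℝ), (0 : ℝ)) = (p.1 + t, p.2) := by
      simp [Prod.ext_iff]
    rw [hx]
    simp only [Real.norm_eq_abs]
    have : |p.1 + t| ≤ 1 := by
      rcases ht with ⟨ht1, ht2⟩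
      have : |p.1 + t| ≤ |p.1| + |t| := abs_add_le _ _
      have htabs : |t| < 1 - |p.1| := abs_lt.2 ⟨ht1, ht2⟩
      linarith
    rw [hc2]
    exact max_eq_right this

lemma corner_image {χ : ℝ × ℝ → ℝ × ℝ} (hχ : AreaPres 1 χ) {p : ℝ × ℝ}
    (hc : IsCorner p) : IsCorner (χ p) := by
  classical
  set C : Set (ℝ × ℝ) := {((1:ℝ),(1:ℝ)), ((1:ℝ),(-1:ℝ)), ((-1:ℝ),(1:ℝ)), ((-1:ℝ),(-1:ℝ))}
    with hC
  have hmemC : ∀ q : ℝ × ℝ, q ∈ C ↔ IsCorner q := by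
    intro q
    rw [isCorner_iff, hC]
    simp [Set.mem_insert_iff]
  have hCD : C ⊆ Disc 1 := fun q hq => sphere_sub_disc (corner_mem_sphere ((hmemC q).1 hq))
  have hsurj : C ⊆ χ '' C := by
    intro z hz
    have hzc : IsCorner z := (hmemC z).1 hz
    have hzD : z ∈ Disc 1 := hCD hz
    obtain ⟨x, hxD, hxz⟩ := hχ.2.1.2.2 hzD
    have hxs : x ∈ Metric.sphere (0 : ℝ × ℝ) 1 :=
      corner_preimage hχ hxD (by rw [hxz]; exact hzc)
    have hxc : IsCorner x := by
      by_contra hncx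
      exact noncorner_image hχ hxs hncx (by rw [hxz]; exact hzc)
    exact ⟨x, (hmemC x).2 hxc, hxz⟩
  have hinj : InjOn χ C := hχ.2.1.2.1.mono hCD
  have hfin : (χ '' C).Finite := (Set.toFinite C).image _
  have heq : C = χ '' C :=
    Set.eq_of_subset_of_ncard_le hsurj (Set.ncard_image_of_injOn hinj).le hfin
  have : χ p ∈ χ '' C := ⟨p, (hmemC p).2 hc, rfl⟩
  rw [← heq] at this
  exact (hmemC _).1 this

lemma iterate_injOn {χ : ℝ × ℝ → ℝ × ℝ} (hχ : AreaPres 1 χ) :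
    ∀ m, Set.InjOn (χ^[m]) (Disc 1) := by
  intro m
  induction m with
  | zero => simp [Set.injOn_id]
  | succ m ih =>
    rw [Function.iterate_succ]
    exact ih.comp hχ.2.1.2.1 hχ.2.1.1

lemma exists_period {χ : ℝ × ℝ → ℝ × ℝ} (hχ : AreaPres 1 χ) :
    ∃ k, 0 < k ∧ χ^[k] ((1:ℝ),(1:ℝ)) = ((1:ℝ),(1:ℝ)) := by
  classical
  set x₀ : ℝ × ℝ := ((1:ℝ),(1:ℝ)) with hx₀
  have hx₀c : IsCorner x₀ := ⟨by norm_num [hx₀], by norm_num [hx₀]⟩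
  have hiter : ∀ i, IsCorner (χ^[i] x₀) := by
    intro i
    induction i with
    | zero => simpa using hx₀c
    | succ i ih => rw [Function.iterate_succ_apply']; exact corner_image hχ ih
  set Cf : Finset (ℝ × ℝ) :=
    {((1:ℝ),(1:ℝ)), ((1:ℝ),(-1:ℝ)), ((-1:ℝ),(1:ℝ)), ((-1:ℝ),(-1:ℝ))} with hCf
  have hcard : Cf.card < 5 := by
    have h1 := Finset.card_insert_le ((1:ℝ),(1:ℝ))
      ({((1:ℝ),(-1:ℝ)), ((-1:ℝ),(1:ℝ)), ((-1:ℝ),(-1:ℝ))} : Finset (ℝ × ℝ))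
    have h2 := Finset.card_insert_le ((1:ℝ),(-1:ℝ))
      ({((-1:ℝ),(1:ℝ)), ((-1:ℝ),(-1:ℝ))} : Finset (ℝ × ℝ))
    have h3 := Finset.card_insert_le ((-1:ℝ),(1:ℝ))
      ({((-1:ℝ),(-1:ℝ))} : Finset (ℝ × ℝ))
    have h4 : ({((-1:ℝ),(-1:ℝ))} : Finset (ℝ × ℝ)).card = 1 := Finset.card_singleton _
    rw [hCf]
    omega
  have hmaps : ∀ i ∈ Finset.range 5, χ^[i] x₀ ∈ Cf := by
    intro i _
    have := (isCorner_iff _).1 (hiter i)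
    rw [hCf]
    simp only [Finset.mem_insert, Finset.mem_singleton]
    tauto
  obtain ⟨i, hi, j, hj, hne, heq⟩ :=
    Finset.exists_ne_map_eq_of_card_lt_of_maps_to (by rwa [Finset.card_range]) hmaps
  have main : ∀ i j : ℕ, i < j → χ^[j] x₀ = χ^[i] x₀ → ∃ k, 0 < k ∧ χ^[k] x₀ = x₀ := by
    intro i j hij hjeq
    refine ⟨j - i, by omega, ?_⟩
    have hD : ∀ m, χ^[m] x₀ ∈ Disc 1 := fun m =>
      sphere_sub_disc (corner_mem_sphere (hiter m))
    have h1 : χ^[i] (χ^[j - i] x₀) = χ^[i] x₀ := by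
      rw [← Function.iterate_add_apply]
      rw [show i + (j - i) = j by omega]
      exact hjeq
    exact iterate_injOn hχ i (hD (j - i)) (by simpa using hD 0) h1
  rcases Ne.lt_or_gt hne with hij | hij
  · exact main i j hij heq.symm
  · exact main j i hij heq

lemma periodic_avg {χ : ℝ × ℝ → ℝ × ℝ} {f : ℝ × ℝ → ℝ} {x₀ : ℝ × ℝ} {k : ℕ}
    (hk : 0 < k) (hper : χ^[k] x₀ = x₀)
    (hb : Tendsto (fun n : ℕ => (∑ i ∈ Finset.range n, f (χ^[i] x₀)) / n) atTop (𝓝 0)) :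
    (∑ i ∈ Finset.range k, f (χ^[i] x₀)) = 0 := by
  set S := ∑ i ∈ Finset.range k, f (χ^[i] x₀) with hSdef
  have hfix : ∀ N : ℕ, χ^[N * k] x₀ = x₀ := by
    intro N
    rw [mul_comm, Function.iterate_mul]
    exact Function.iterate_fixed hper N
  have hsum : ∀ N : ℕ, (∑ i ∈ Finset.range (N * k), f (χ^[i] x₀)) = N * S := by
    intro N
    induction N with
    | zero => simp
    | succ N ih =>
      have : (N + 1) * k = N * k + k := by ring
      rw [this, Finset.sum_range_add, ih]
      have : ∀ i, f (χ^[N * k + i] x₀) = f (χ^[i] x₀) := by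
        intro i
        rw [add_comm, Function.iterate_add_apply, hfix]
      rw [Finset.sum_congr rfl (fun i _ => this i)]
      push_cast
      ring
  have hcomp : Tendsto (fun N : ℕ => N * k) atTop atTop :=
    tendsto_atTop_mono (fun N => Nat.le_mul_of_pos_right N hk) tendsto_id
  have h2 : Tendsto (fun N : ℕ =>
      (∑ i ∈ Finset.range (N * k), f (χ^[i] x₀)) / ((N * k : ℕ) : ℝ)) atTop (𝓝 0) :=
    hb.comp hcomp
  have h3 : ∀ᶠ N : ℕ in atTop, (∑ i ∈ Finset.range (N * k), f (χ^[i] x₀)) / ((N * k : ℕ) : ℝ)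
      = S / k := by
    filter_upwards [eventually_ge_atTop 1] with N hN
    rw [hsum N]
    have hN0 : (N : ℝ) ≠ 0 := by positivity
    have hk0 : (k : ℝ) ≠ 0 := by positivity
    push_cast
    field_simp
  have h4 : Tendsto (fun _ : ℕ => S / (k : ℝ)) atTop (𝓝 0) := h2.congr' h3
  have h5 : S / (k : ℝ) = 0 := by
    have := tendsto_nhds_unique h4 tendsto_const_nhds
    exact this.symm ▸ rfl
  have hk0 : (k : ℝ) ≠ 0 := by positivity
  field_simp at h5
  simpa using h5

end CalabiAux

open CalabiAux in
/-- if area-preserving diffeomorphisms φₙ of the disc converge to φ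
in the C¹ topology, then 𝒱(φₙ,0) → 𝒱(φ,0), where the Calabi invariants are
computed from the action functions normalized to have asymptotic mean 0 on ∂𝔻. -/
theorem calabi_c1_continuous (φn : ℕ → ℝ × ℝ → ℝ × ℝ) (φ : ℝ × ℝ → ℝ × ℝ)
    (fn : ℕ → ℝ × ℝ → ℝ) (f : ℝ × ℝ → ℝ)
    (hφn : ∀ n, AreaPres 1 (φn n)) (hφ : AreaPres 1 φ)
    (hfn : ∀ n, IsActionFn 1 (φn n) (fn n))
    (hbn : ∀ n, BoundaryMeanZero 1 (φn n) (fn n))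
    (hf : IsActionFn 1 φ f) (hb : BoundaryMeanZero 1 φ f)
    (hC0 : TendstoUniformlyOn (fun n => φn n) φ Filter.atTop (Disc 1))
    (hC1 : TendstoUniformlyOn (fun n => fderivWithin ℝ (φn n) (Disc 1))
      (fderivWithin ℝ φ (Disc 1)) Filter.atTop (Disc 1)) :
    Filter.Tendsto (fun n => Calabi 1 (fn n)) Filter.atTop (nhds (Calabi 1 f)) := by
  classical
  have hUD : UniqueDiffOn ℝ (Disc 1) := discUnique
  have hconv : Convex ℝ (Disc 1) := convex_closedBall _ _
  have hcomp : IsCompact (Disc 1) := isCompact_closedBall _ _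
  set x₀ : ℝ × ℝ := ((1:ℝ),(1:ℝ)) with hx₀def
  have hx₀c : IsCorner x₀ := ⟨by norm_num [hx₀def], by norm_num [hx₀def]⟩
  have hx₀s : x₀ ∈ Metric.sphere (0 : ℝ × ℝ) 1 := corner_mem_sphere hx₀c
  have hx₀D : x₀ ∈ Disc 1 := sphere_sub_disc hx₀s
  obtain ⟨k, hk, hper⟩ := exists_period hφ
  have hyc : ∀ i, IsCorner (φ^[i] x₀) := by
    intro i
    induction i with
    | zero => simpa using hx₀c
    | succ i ih => rw [Function.iterate_succ_apply']; exact corner_image hφ ih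
  have hyD : ∀ i, φ^[i] x₀ ∈ Disc 1 := fun i => sphere_sub_disc (corner_mem_sphere (hyc i))
  have hS0 : (∑ i ∈ Finset.range k, f (φ^[i] x₀)) = 0 := periodic_avg hk hper (hb x₀ hx₀s)
  -- bound on the derivative of φ on the disc
  obtain ⟨M₀, hM₀⟩ := hcomp.exists_bound_of_continuousOn
    (hφ.1.continuousOn_fderivWithin hUD (by simp))
  set M : ℝ := max M₀ 0 with hMdef
  have hM : ∀ p ∈ Disc 1, ‖fderivWithin ℝ φ (Disc 1) p‖ ≤ M :=
    fun p hp => (hM₀ p hp).trans (le_max_left _ _)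
  have hM0 : 0 ≤ M := le_max_right _ _
  -- eventual agreement on corners
  have hagree : ∀ᶠ n in atTop, ∀ q : ℝ × ℝ, IsCorner q → φn n q = φ q := by
    have h2 := (Metric.tendstoUniformlyOn_iff.1 hC0) 2 (by norm_num)
    filter_upwards [h2] with n hn q hq
    have hqD : q ∈ Disc 1 := sphere_sub_disc (corner_mem_sphere hq)
    have hd : dist (φ q) (φn n q) < 2 := hn q hqD
    exact corner_dist (corner_image (hφn n) hq) (corner_image hφ hq)
      (by rw [dist_comm] at hd; exact hd)
  have horb : ∀ᶠ n in atTop, (∑ i ∈ Finset.range k, fn n (φ^[i] x₀)) = 0 := by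
    filter_upwards [hagree] with n hn
    have hiter : ∀ i, (φn n)^[i] x₀ = φ^[i] x₀ := by
      intro i
      induction i with
      | zero => rfl
      | succ i ih =>
        rw [Function.iterate_succ_apply', Function.iterate_succ_apply', ih, hn _ (hyc i)]
    have hpern : (φn n)^[k] x₀ = x₀ := by rw [hiter]; exact hper
    have := periodic_avg hk hpern (hbn n x₀ hx₀s)
    calc (∑ i ∈ Finset.range k, fn n (φ^[i] x₀))
        = ∑ i ∈ Finset.range k, fn n ((φn n)^[i] x₀) := by
          refine Finset.sum_congr rfl fun i _ => by rw [hiter]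
      _ = 0 := this
  -- volume facts
  have hVfin : volume (Disc 1) < ⊤ := hcomp.measure_lt_top
  have hVpos : 0 < (volume (Disc 1)).toReal := by
    refine ENNReal.toReal_pos ?_ hVfin.ne
    rw [Disc]
    exact (measure_closedBall_pos volume (0 : ℝ × ℝ) one_pos).ne'
  set V : ℝ := (volume (Disc 1)).toReal with hVdef
  -- integrability
  have hintf : IntegrableOn f (Disc 1) volume :=
    ContinuousOn.integrableOn_compact hcomp hf.1.continuousOn
  have hintfn : ∀ n, IntegrableOn (fn n) (Disc 1) volume :=
    fun n => ContinuousOn.integrableOn_compact hcomp (hfn n).1.continuousOn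
  rw [Metric.tendsto_atTop]
  intro ε hε
  set ε₁ : ℝ := ε / 8 with hε₁def
  have hε₁ : 0 < ε₁ := by rw [hε₁def]; linarith
  -- eventual derivative bound
  have hKn : ∀ᶠ n in atTop, ∀ p ∈ Disc 1,
      ‖fderivWithin ℝ (fn n) (Disc 1) p - fderivWithin ℝ f (Disc 1) p‖ ≤ ε₁ := by
    have hMn : ∀ᶠ n in atTop, ∀ p ∈ Disc 1,
        ‖fderivWithin ℝ (φn n) (Disc 1) p‖ ≤ M + 1 := by
      filter_upwards [(Metric.tendstoUniformlyOn_iff.1 hC1) 1 one_pos] with n hn p hp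
      have hd := hn p hp
      rw [dist_eq_norm] at hd
      calc ‖fderivWithin ℝ (φn n) (Disc 1) p‖
          = ‖fderivWithin ℝ φ (Disc 1) p -
              (fderivWithin ℝ φ (Disc 1) p - fderivWithin ℝ (φn n) (Disc 1) p)‖ := by
            congr 1; abel
        _ ≤ ‖fderivWithin ℝ φ (Disc 1) p‖ +
              ‖fderivWithin ℝ φ (Disc 1) p - fderivWithin ℝ (φn n) (Disc 1) p‖ :=
            norm_sub_le _ _
        _ ≤ M + 1 := add_le_add (hM p hp) hd.le
    have hc0 := (Metric.tendstoUniformlyOn_iff.1 hC0) (ε₁ / (2 * (M + 1)))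
      (by positivity)
    have hc1 := (Metric.tendstoUniformlyOn_iff.1 hC1) (ε₁ / 2) (by positivity)
    filter_upwards [hMn, hc0, hc1] with n h1 h2 h3 p hp
    rw [(hfn n).2 p hp, hf.2 p hp]
    set An := fderivWithin ℝ (φn n) (Disc 1) p with hAn
    set A := fderivWithin ℝ φ (Disc 1) p with hA
    have key : pullbackMinusBeta 1 (φn n) p - pullbackMinusBeta 1 φ p
        = (betaForm ((φn n) p) - betaForm (φ p)).comp An
          + (betaForm (φ p)).comp (An - A) := by
      rw [pullbackMinusBeta, pullbackMinusBeta, ← hAn, ← hA]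
      refine ContinuousLinearMap.ext fun v => ?_
      simp only [ContinuousLinearMap.sub_apply, ContinuousLinearMap.add_apply,
        ContinuousLinearMap.comp_apply, map_sub]
      ring
    rw [key]
    have e1 : ‖betaForm ((φn n) p) - betaForm (φ p)‖ ≤ ‖(φn n) p - φ p‖ := betaForm_sub _ _
    have e2 : ‖(φn n) p - φ p‖ ≤ ε₁ / (2 * (M + 1)) := by
      have := h2 p hp
      rw [dist_eq_norm, norm_sub_rev] at this
      exact this.le
    have e3 : ‖An‖ ≤ M + 1 := h1 p hp
    have e4 : ‖betaForm (φ p)‖ ≤ 1 :=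
      (betaForm_norm _).trans (mem_disc.1 (hφ.2.1.1 hp))
    have e5 : ‖An - A‖ ≤ ε₁ / 2 := by
      have := h3 p hp
      rw [dist_eq_norm, norm_sub_rev] at this
      exact this.le
    have p1 : ‖(betaForm ((φn n) p) - betaForm (φ p)).comp An‖ ≤ ε₁ / 2 := by
      refine (ContinuousLinearMap.opNorm_comp_le _ _).trans ?_
      have : ‖betaForm ((φn n) p) - betaForm (φ p)‖ * ‖An‖
          ≤ (ε₁ / (2 * (M + 1))) * (M + 1) :=
        mul_le_mul (e1.trans e2) e3 (norm_nonneg _) (by positivity)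
      refine this.trans ?_
      rw [div_mul_eq_mul_div, mul_comm (2:ℝ) (M+1), ← div_div]
      rw [mul_div_assoc]
      have hM1 : (M + 1) ≠ 0 := by positivity
      rw [div_self hM1, mul_one]
    have p2 : ‖(betaForm (φ p)).comp (An - A)‖ ≤ ε₁ / 2 := by
      refine (ContinuousLinearMap.opNorm_comp_le _ _).trans ?_
      calc ‖betaForm (φ p)‖ * ‖An - A‖ ≤ 1 * (ε₁ / 2) :=
            mul_le_mul e4 e5 (norm_nonneg _) zero_le_one
        _ = ε₁ / 2 := one_mul _
    calc ‖(betaForm ((φn n) p) - betaForm (φ p)).comp An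
          + (betaForm (φ p)).comp (An - A)‖
        ≤ ‖(betaForm ((φn n) p) - betaForm (φ p)).comp An‖
          + ‖(betaForm (φ p)).comp (An - A)‖ := norm_add_le _ _
      _ ≤ ε₁ / 2 + ε₁ / 2 := add_le_add p1 p2
      _ = ε₁ := by ring
  obtain ⟨N, hN⟩ := Filter.eventually_atTop.1 (hKn.and horb)
  refine ⟨N, fun n hn => ?_⟩
  obtain ⟨hKb, hsum⟩ := hN n hn
  set g : ℝ × ℝ → ℝ := fun p => fn n p - f p with hgdef
  have hdfn : DifferentiableOn ℝ (fn n) (Disc 1) := (hfn n).1.differentiableOn (by simp)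
  have hdf : DifferentiableOn ℝ f (Disc 1) := hf.1.differentiableOn (by simp)
  have hg : DifferentiableOn ℝ g (Disc 1) := hdfn.sub hdf
  have hgd : ∀ p ∈ Disc 1, ‖fderivWithin ℝ g (Disc 1) p‖ ≤ ε₁ := by
    intro p hp
    rw [hgdef]
    rw [fderivWithin_fun_sub (hUD p hp) (hdfn p hp) (hdf p hp)]
    exact hKb p hp
  have hmv : ∀ p ∈ Disc 1, |g p - g x₀| ≤ 2 * ε₁ := by
    intro p hp
    have h := hconv.norm_image_sub_le_of_norm_fderivWithin_le hg hgd hx₀D hp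
    have hpn : ‖p - x₀‖ ≤ 2 := by
      refine (norm_sub_le p x₀).trans ?_
      have h1 : ‖p‖ ≤ 1 := mem_disc.1 hp
      have h2 : ‖x₀‖ ≤ 1 := mem_disc.1 hx₀D
      linarith
    rw [Real.norm_eq_abs] at h
    calc |g p - g x₀| ≤ ε₁ * ‖p - x₀‖ := h
      _ ≤ ε₁ * 2 := by nlinarith
      _ = 2 * ε₁ := by ring
  have hgx₀ : |g x₀| ≤ 2 * ε₁ := by
    have hSg : (∑ i ∈ Finset.range k, g (φ^[i] x₀)) = 0 := by
      rw [hgdef]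
      rw [Finset.sum_sub_distrib, hsum, hS0, sub_zero]
    have hconst : (k : ℝ) * g x₀ = ∑ i ∈ Finset.range k, (g x₀ - g (φ^[i] x₀)) := by
      rw [Finset.sum_sub_distrib, hSg, sub_zero, Finset.sum_const, Finset.card_range,
        nsmul_eq_mul]
    have hble : |(k : ℝ) * g x₀| ≤ (k : ℝ) * (2 * ε₁) := by
      rw [hconst]
      refine (Finset.abs_sum_le_sum_abs _ _).trans ?_
      have hterm : ∀ i ∈ Finset.range k, |g x₀ - g (φ^[i] x₀)| ≤ 2 * ε₁ := by
        intro i _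
        rw [abs_sub_comm]
        exact hmv _ (hyD i)
      calc ∑ i ∈ Finset.range k, |g x₀ - g (φ^[i] x₀)|
          ≤ ∑ _i ∈ Finset.range k, (2 * ε₁) := Finset.sum_le_sum hterm
        _ = (k : ℝ) * (2 * ε₁) := by
            rw [Finset.sum_const, Finset.card_range, nsmul_eq_mul]
    rw [abs_mul, Nat.abs_cast] at hble
    have hkpos : (0 : ℝ) < k := by exact_mod_cast hk
    exact le_of_mul_le_mul_left hble hkpos
  have hgall : ∀ p ∈ Disc 1, |g p| ≤ 4 * ε₁ := by
    intro p hp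
    calc |g p| = |(g p - g x₀) + g x₀| := by ring_nf
      _ ≤ |g p - g x₀| + |g x₀| := abs_add_le _ _
      _ ≤ 2 * ε₁ + 2 * ε₁ := add_le_add (hmv p hp) hgx₀
      _ = 4 * ε₁ := by ring
  have hCal : Calabi 1 (fn n) - Calabi 1 f = (∫ p in Disc 1, g p) / V := by
    rw [Calabi, Calabi, div_sub_div_same, ← hVdef]
    congr 1
    rw [hgdef, integral_sub (hintfn n) hintf]
  have hIb : |∫ p in Disc 1, g p| ≤ 4 * ε₁ * V := by
    have := norm_setIntegral_le_of_norm_le_const (C := 4 * ε₁) hVfin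
      (fun p hp => by rw [Real.norm_eq_abs]; exact hgall p hp)
    rw [Real.norm_eq_abs] at this
    exact this
  rw [Real.dist_eq]
  have : |Calabi 1 (fn n) - Calabi 1 f| ≤ 4 * ε₁ := by
    rw [hCal, abs_div, abs_of_pos hVpos]
    rw [div_le_iff₀ hVpos]
    exact hIb
  calc |Calabi 1 (fn n) - Calabi 1 f| ≤ 4 * ε₁ := this
    _ = ε / 2 := by rw [hε₁def]; ring
    _ < ε := by linarith
end
end
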